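/- Let B be an exact Krull–Schmidt Frobenius k-category whose stable category B̄ has finite-dimensional Hom-spaces, and let C be a functorially finite maximal (d−1)-orthogonal subcategory with d ≥ 2 and C̄[d] = C̄. For M ∈ mod-C̄ with projective resolution 0 → B(−,C_{d+1}) → ⋯ → B(−,C₀) → M → 0 in mod-C as in Theorem 2.5(1), the induced sequence of functors on C̄, 0 → Tor^C_{d+1}(M,C̄) → B̄(−,C_{d+1}) → ⋯ → B̄(−,C₀) → M → 0, is exact; hence it gives the first d+2 terms of a projective resolution of M in mod-C̄. -/

import Mathlib

open CategoryTheory CategoryTheory.Limits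

universe v u

/-- Bundled data of an exact Krull–Schmidt Frobenius `k`-category: an additive
`k`-linear category equipped with a class of admissible short exact sequences,
a class of projective(-injective) objects satisfying the usual lifting
properties on both sides (the Frobenius property), chosen projective covers
with syzygies and injective envelopes with cosyzygies (enough projectives and
enough injectives), the Krull--Schmidt property, and Hom-finiteness of the
stable category (Hom's modulo maps factoring through projectives). -/
structure FrobeniusSetup (k : Type) [Field k] (B : Type u) [Category.{v} B] [Preadditive B]
    [CategoryTheory.Linear k B] [HasFiniteBiproducts B] [HasBinaryBiproducts B] : Type (max u v) where
  /-- the admissible short exact sequences `0 → X → Y → Z → 0` of the exact structure -/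
  IsSES : ∀ {X Y Z : B}, (X ⟶ Y) → (Y ⟶ Z) → Prop
  /-- the projective (equivalently injective) objects -/
  Proj : B → Prop
  ses_zero : ∀ {X Y Z : B} (f : X ⟶ Y) (g : Y ⟶ Z), IsSES f g → f ≫ g = 0
  /-- in an admissible short exact sequence, `f` is a kernel of `g` -/
  ses_ker : ∀ {X Y Z : B} (f : X ⟶ Y) (g : Y ⟶ Z), IsSES f g →
      ∀ {W : B} (u : W ⟶ Y), u ≫ g = 0 → ∃! v : W ⟶ X, v ≫ f = u
  /-- in an admissible short exact sequence, `g` is a cokernel of `f` -/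
  ses_coker : ∀ {X Y Z : B} (f : X ⟶ Y) (g : Y ⟶ Z), IsSES f g →
      ∀ {W : B} (u : Y ⟶ W), f ≫ u = 0 → ∃! v : Z ⟶ W, g ≫ v = u
  /-- admissible short exact sequences are closed under isomorphism -/
  ses_iso : ∀ {X Y Z X' Y' Z' : B} (f : X ⟶ Y) (g : Y ⟶ Z)
      (iX : X ≅ X') (iY : Y ≅ Y') (iZ : Z ≅ Z') (f' : X' ⟶ Y') (g' : Y' ⟶ Z'),
      IsSES f g → f ≫ iY.hom = iX.hom ≫ f' → g ≫ iZ.hom = iY.hom ≫ g' → IsSES f' g'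
  /-- split exact sequences are admissible -/
  ses_split : ∀ X Y : B, IsSES (biprod.inl : X ⟶ X ⊞ Y) (biprod.snd : X ⊞ Y ⟶ Y)
  /-- the `Proj` objects are precisely the projective objects of the exact structure -/
  proj_iff : ∀ P : B, Proj P ↔
      (∀ {X Y Z : B} (f : X ⟶ Y) (g : Y ⟶ Z), IsSES f g →
        ∀ h : P ⟶ Z, ∃ l : P ⟶ Y, l ≫ g = h)
  /-- the Frobenius property: `Proj` objects are precisely the injective objects -/
  inj_iff : ∀ P : B, Proj P ↔
      (∀ {X Y Z : B} (f : X ⟶ Y) (g : Y ⟶ Z), IsSES f g →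
        ∀ h : X ⟶ P, ∃ l : Y ⟶ P, f ≫ l = h)
  /-- a chosen projective cover (enough projectives) -/
  P : B → B
  projP : ∀ X : B, Proj (P X)
  pr : ∀ X : B, P X ⟶ X
  /-- the chosen syzygy -/
  syz : B → B
  syzMono : ∀ X : B, syz X ⟶ P X
  ses_syz : ∀ X : B, IsSES (syzMono X) (pr X)
  /-- a chosen injective envelope (enough injectives) -/
  I : B → B
  projI : ∀ X : B, Proj (I X)
  en : ∀ X : B, X ⟶ I X
  /-- the chosen cosyzygy, i.e. the suspension of the stable category -/
  cosyz : B → B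
  cosyzEpi : ∀ X : B, I X ⟶ cosyz X
  ses_cosyz : ∀ X : B, IsSES (en X) (cosyzEpi X)
  /-- the Krull–Schmidt property: every object is a finite biproduct of objects
  with local endomorphism rings -/
  krullSchmidt : ∀ X : B, ∃ (n : ℕ) (Y : Fin n → B),
      (∀ i, IsLocalRing (End (Y i))) ∧ Nonempty (X ≅ ⨁ Y)
  /-- Hom-finiteness of the stable category -/
  homFinite : ∀ X Y : B, FiniteDimensional k
      ((X ⟶ Y) ⧸ Submodule.span k
        {f : X ⟶ Y | ∃ (Q : B) (g : X ⟶ Q) (h : Q ⟶ Y), Proj Q ∧ f = g ≫ h})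

namespace FrobeniusSetup

variable {k : Type} [Field k] {B : Type u} [Category.{v} B] [Preadditive B]
  [CategoryTheory.Linear k B] [HasFiniteBiproducts B] [HasBinaryBiproducts B] (S : FrobeniusSetup k B)

/-- The ideal of maps factoring through a projective object. -/
def projIdeal (X Y : B) : Submodule k (X ⟶ Y) :=
  Submodule.span k {f : X ⟶ Y | ∃ (Q : B) (g : X ⟶ Q) (h : Q ⟶ Y), S.Proj Q ∧ f = g ≫ h}

/-- Stable Hom: morphisms in the stable category `B̄`. -/
def sHom (X Y : B) : Type v := (X ⟶ Y) ⧸ S.projIdeal X Y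

noncomputable instance (X Y : B) : AddCommGroup (S.sHom X Y) :=
  inferInstanceAs (AddCommGroup ((X ⟶ Y) ⧸ S.projIdeal X Y))

noncomputable instance (X Y : B) : Module k (S.sHom X Y) :=
  inferInstanceAs (Module k ((X ⟶ Y) ⧸ S.projIdeal X Y))

/-- The class of a morphism in the stable category. -/
def sMk {X Y : B} (f : X ⟶ Y) : S.sHom X Y := Submodule.Quotient.mk f

/-- Vanishing of the stable Hom-space `B̄(X,Y)`. -/
def sVanish (X Y : B) : Prop := S.projIdeal X Y = ⊤

/-- `X` and `Y` are isomorphic in the stable category `B̄`. -/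
def StIso (X Y : B) : Prop :=
  ∃ (f : X ⟶ Y) (g : Y ⟶ X),
    f ≫ g - 𝟙 X ∈ S.projIdeal X X ∧ g ≫ f - 𝟙 Y ∈ S.projIdeal Y Y

/-- The shift (suspension) `X[n]` in the stable category: iterated cosyzygies for
`n ≥ 0` and iterated syzygies for `n < 0`. -/
def shift : ℤ → B → B
  | Int.ofNat n, X => S.cosyz^[n] X
  | Int.negSucc n, X => S.syz^[n + 1] X

/-- `Ext^i_B(X,Y) = 0`, expressed via the standard identification
`Ext^i(X,Y) ≅ B̄(Ω^i X, Y)` for `i ≥ 1` valid in a Frobenius category. -/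
def extVanish (i : ℕ) (X Y : B) : Prop := S.sVanish (S.syz^[i] X) Y

/-- `C` is a maximal `(d-1)`-orthogonal subcategory of `B`. -/
def MaxOrthogonal (C : Set B) (d : ℕ) : Prop :=
  (∀ X : B, X ∈ C ↔ ∀ i : ℕ, 1 ≤ i → i < d → ∀ C₀ ∈ C, S.extVanish i X C₀) ∧
  (∀ Y : B, Y ∈ C ↔ ∀ i : ℕ, 1 ≤ i → i < d → ∀ C₀ ∈ C, S.extVanish i C₀ Y)

/-- `C` is functorially finite in `B`: every object admits a right and a left
`C`-approximation. -/
def FunctoriallyFinite (_S : FrobeniusSetup k B) (C : Set B) : Prop :=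
  (∀ X : B, ∃ C₀ ∈ C, ∃ f : C₀ ⟶ X, ∀ C₁ ∈ C, ∀ g : C₁ ⟶ X, ∃ h : C₁ ⟶ C₀, h ≫ f = g) ∧
  (∀ X : B, ∃ C₀ ∈ C, ∃ f : X ⟶ C₀, ∀ C₁ ∈ C, ∀ g : X ⟶ C₁, ∃ h : C₀ ⟶ C₁, f ≫ h = g)

/-- The subcategory `E_j = {X | B̄(C, X[i]) = 0 for 1 ≤ i ≤ d-1, i ≠ j}`. -/
def Esub (C : Set B) (d j : ℕ) : Set B :=
  {X : B | ∀ i : ℕ, 1 ≤ i → i ≤ d - 1 → i ≠ j → ∀ C₀ ∈ C, S.sVanish C₀ (S.cosyz^[i] X)}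

/-- `C̄[d] = C̄`: the `d`-th syzygy of every object of `C` again lies in `C`,
up to stable isomorphism (i.e. up to projective summands). -/
def ShiftStable (C : Set B) (d : ℕ) : Prop :=
  ∀ C₀ ∈ C, ∃ C₁ ∈ C, S.StIso (S.syz^[d] C₀) C₁

end FrobeniusSetup
namespace FrobeniusSetup

section FunctorCats

variable {k : Type} [Field k] {B : Type u} [Category.{v} B] [Preadditive B]
  [CategoryTheory.Linear k B] [HasFiniteBiproducts B] [HasBinaryBiproducts B]
  (S : FrobeniusSetup k B)

/-- Postcomposition on stable Hom's. -/
noncomputable def sComp (X : B) {Y Z : B} (w : Y ⟶ Z) : S.sHom X Y →ₗ[k] S.sHom X Z :=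
  Submodule.mapQ _ _ (Linear.rightComp k X w) (by
    simp only [projIdeal, Submodule.span_le]
    rintro f ⟨Q, g, h, hQ, rfl⟩
    exact Submodule.mem_comap.2 (Submodule.subset_span ⟨Q, g, h ≫ w, hQ, by simp⟩))

/-- Precomposition on stable Hom's. -/
noncomputable def sPre {W X : B} (u : W ⟶ X) (Y : B) : S.sHom X Y →ₗ[k] S.sHom W Y :=
  Submodule.mapQ _ _ (Linear.leftComp k Y u) (by
    simp only [projIdeal, Submodule.span_le]
    rintro f ⟨Q, g, h, hQ, rfl⟩
    exact Submodule.mem_comap.2 (Submodule.subset_span ⟨Q, u ≫ g, h, hQ, by simp⟩))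

@[simp] lemma sComp_mk (X : B) {Y Z : B} (w : Y ⟶ Z) (f : X ⟶ Y) :
    S.sComp X w (S.sMk f) = S.sMk (f ≫ w) := rfl

@[simp] lemma sPre_mk {W X : B} (u : W ⟶ X) (Y : B) (f : X ⟶ Y) :
    S.sPre u Y (S.sMk f) = S.sMk (u ≫ f) := rfl

variable (CC : Set B)

/-- The restriction to `C` of the representable functor `B(-,X)`; for `X ∈ C`
these are exactly the projective objects of `mod-C`. -/
def LinRep (X : B) : (ObjectProperty.FullSubcategory (· ∈ CC))ᵒᵖ ⥤ ModuleCat k :=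
  (ObjectProperty.ι (· ∈ CC)).op ⋙ (linearYoneda k B).obj X

/-- The natural transformation `B(-,X) ⟶ B(-,Y)` induced by `w : X ⟶ Y`. -/
def lMap {X Y : B} (w : X ⟶ Y) : LinRep (k := k) CC X ⟶ LinRep CC Y :=
  Functor.whiskerLeft (ObjectProperty.ι (· ∈ CC)).op
    ((linearYoneda k B).map w)

/-- The restriction to `C̄` of the stable representable functor `B̄(-,X)`. -/
noncomputable def SRep (X : B) : (ObjectProperty.FullSubcategory (· ∈ CC))ᵒᵖ ⥤ ModuleCat k where
  obj c := ModuleCat.of k (S.sHom c.unop.obj X)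
  map {c c'} u := ModuleCat.ofHom (S.sPre (u.unop.hom : c'.unop.obj ⟶ c.unop.obj) X)
  map_id c := by
    ext x
    obtain ⟨f, rfl⟩ := Submodule.Quotient.mk_surjective _ x
    show S.sMk ((𝟙 c.unop.obj : c.unop.obj ⟶ c.unop.obj) ≫ f) = S.sMk f
    rw [Category.id_comp]
  map_comp {c c' c''} u v := by
    ext x
    obtain ⟨f, rfl⟩ := Submodule.Quotient.mk_surjective _ x
    show S.sMk (((v.unop.hom : c''.unop.obj ⟶ c'.unop.obj) ≫
        (u.unop.hom : c'.unop.obj ⟶ c.unop.obj)) ≫ f)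
      = S.sMk ((v.unop.hom : c''.unop.obj ⟶ c'.unop.obj) ≫
        ((u.unop.hom : c'.unop.obj ⟶ c.unop.obj) ≫ f))
    rw [Category.assoc]

/-- The natural transformation `B̄(-,X) ⟶ B̄(-,Y)` induced by `w : X ⟶ Y`. -/
noncomputable def sMap {X Y : B} (w : X ⟶ Y) : S.SRep CC X ⟶ S.SRep CC Y where
  app c := ModuleCat.ofHom (S.sComp c.unop.obj w)
  naturality {c c'} u := by
    ext x
    obtain ⟨f, rfl⟩ := Submodule.Quotient.mk_surjective _ x
    show S.sMk (((u.unop.hom : c'.unop.obj ⟶ c.unop.obj) ≫ f) ≫ w)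
      = S.sMk ((u.unop.hom : c'.unop.obj ⟶ c.unop.obj) ≫ (f ≫ w))
    rw [Category.assoc]

/-- A functor on `C` underlies a functor on the stable category `C̄` iff it kills
all maps factoring through a projective object of `B`. -/
def KillsProj (M : (ObjectProperty.FullSubcategory (· ∈ CC))ᵒᵖ ⥤ ModuleCat k) : Prop :=
  ∀ (c c' : (ObjectProperty.FullSubcategory (· ∈ CC))ᵒᵖ) (u : c ⟶ c'),
    (u.unop.hom : c'.unop.obj ⟶ c.unop.obj) ∈ S.projIdeal c'.unop.obj c.unop.obj → M.map u = 0

/-- `M` is a finitely presented k-linear contravariant functor on the stable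
category `C̄`, i.e. an object of `mod-C̄`: it admits a projective presentation
`B̄(-,C₁) → B̄(-,C₀) → M → 0` by (restricted) stable representables. -/
def IsFPStable (M : (ObjectProperty.FullSubcategory (· ∈ CC))ᵒᵖ ⥤ ModuleCat k) : Prop :=
  ∃ (C₁ C₀ : B), C₁ ∈ CC ∧ C₀ ∈ CC ∧
    ∃ (φ : S.SRep CC C₁ ⟶ S.SRep CC C₀) (ε : S.SRep CC C₀ ⟶ M),
      ∀ c, Function.Surjective (ε.app c) ∧ Function.Exact (φ.app c) (ε.app c)

/-- `M` is a finitely presented k-linear contravariant functor on `C`,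
i.e. an object of `mod-C`. -/
def IsFP (M : (ObjectProperty.FullSubcategory (· ∈ CC))ᵒᵖ ⥤ ModuleCat k) : Prop :=
  ∃ (C₁ C₀ : B), C₁ ∈ CC ∧ C₀ ∈ CC ∧
    ∃ (φ : LinRep (k := k) CC C₁ ⟶ LinRep CC C₀) (ε : LinRep (k := k) CC C₀ ⟶ M),
      ∀ c, Function.Surjective (ε.app c) ∧ Function.Exact (φ.app c) (ε.app c)

end FunctorCats

end FrobeniusSetup

/-!
`M` lives on `C̄`, so it kills every map factoring through a projective; this gives exactness at
`B̄(-,C₀)`. For exactness at `B̄(-,C_{m+1})`, let `x : X ⟶ C_{m+1}` be such that `x ≫ g m` factors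
through a projective, hence through the injective envelope `X ⟶ I X`. Induction on `m`, passing
from `X` to `ΣX`, shows that such a cycle is `X ⟶ I X ⟶ C_{m+1} ⟶ C_m`, so that `x` is a boundary
up to a map through `I X`. The induction consumes `B̄(Σʳ X, C_n) = 0` for `X, C_n ∈ C` and
`1 ≤ r < d`. Since `Ω^d C_n ∈ C̄`, maximality gives `B̄(Ω^{d-r} X, Ω^d C_n) = 0`, and dimension
shifting along the syzygy and cosyzygy conflations turns this into `B̄(X, Ω^r C_n) = 0` and then
into `B̄(Σʳ X, C_n) = 0`.
-/

namespace FrobeniusSetup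

variable {k : Type} [Field k] {B : Type u} [Category.{v} B] [Preadditive B]
  [CategoryTheory.Linear k B]

open Opposite

section Representables

variable {C : Set B} {N : (ObjectProperty.FullSubcategory (· ∈ C))ᵒᵖ ⥤ ModuleCat k}
  {c : (ObjectProperty.FullSubcategory (· ∈ C))ᵒᵖ} {X Y : B} {f : X ⟶ Y}
  {η : LinRep (k := k) C Y ⟶ N}

lemma exists_comp_eq_of_exact (h : Function.Exact ((lMap (k := k) C f).app c) (η.app c))
    {y : c.unop.obj ⟶ Y} (hy : η.app c y = 0) : ∃ x : c.unop.obj ⟶ X, x ≫ f = y :=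
  (h y).1 hy

lemma app_comp_eq_zero_of_exact (h : Function.Exact ((lMap (k := k) C f).app c) (η.app c))
    (x : c.unop.obj ⟶ X) : η.app c (x ≫ f) = 0 :=
  h.apply_apply_eq_zero x

lemma comp_eq_zero_of_exact_lMap {Z : B} {g : Y ⟶ Z} (hX : X ∈ C)
    (h : Function.Exact ((lMap (k := k) C f).app (op ⟨X, hX⟩))
      ((lMap (k := k) C g).app (op ⟨X, hX⟩))) : f ≫ g = 0 := by
  have h' : (𝟙 X ≫ f) ≫ g = 0 := app_comp_eq_zero_of_exact h (𝟙 X)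
  rwa [Category.id_comp] at h'

end Representables

variable [HasFiniteBiproducts B] [HasBinaryBiproducts B] (S : FrobeniusSetup k B)

section ProjIdeal

lemma epi_of_isSES {X Y Z : B} {f : X ⟶ Y} {g : Y ⟶ Z} (h : S.IsSES f g) : Epi g :=
  ⟨fun a b hab => by
    obtain ⟨_, -, huniq⟩ := S.ses_coker f g h (g ≫ a)
      (by rw [← Category.assoc, S.ses_zero f g h, Limits.zero_comp])
    exact (huniq a rfl).trans (huniq b hab.symm).symm⟩

lemma comp_mem_projIdeal {X Y Q : B} (hQ : S.Proj Q) (a : X ⟶ Q) (b : Q ⟶ Y) :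
    a ≫ b ∈ S.projIdeal X Y :=
  Submodule.subset_span ⟨Q, a, b, hQ, rfl⟩

lemma mem_projIdeal_of_proj_left {X Y : B} (hX : S.Proj X) (f : X ⟶ Y) :
    f ∈ S.projIdeal X Y := by
  simpa using S.comp_mem_projIdeal hX (𝟙 X) f

lemma mem_projIdeal_of_proj_right {X Y : B} (hY : S.Proj Y) (f : X ⟶ Y) :
    f ∈ S.projIdeal X Y := by
  simpa using S.comp_mem_projIdeal hY f (𝟙 Y)

lemma mem_projIdeal_of_sVanish {X Y : B} (h : S.sVanish X Y) (f : X ⟶ Y) :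
    f ∈ S.projIdeal X Y :=
  h ▸ Submodule.mem_top

lemma comp_mem_projIdeal_of_mem_left {X Y Z : B} {p : X ⟶ Y} (hp : p ∈ S.projIdeal X Y)
    (w : Y ⟶ Z) : p ≫ w ∈ S.projIdeal X Z := by
  have : S.projIdeal X Y ≤ (S.projIdeal X Z).comap (Linear.rightComp k X w) :=
    Submodule.span_le.2 fun _ ⟨Q, a, b, hQ, hf⟩ => by
      simpa [hf] using S.comp_mem_projIdeal hQ a (b ≫ w)
  exact this hp

lemma comp_mem_projIdeal_of_mem_right {W X Y : B} {p : X ⟶ Y} (hp : p ∈ S.projIdeal X Y)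
    (u : W ⟶ X) : u ≫ p ∈ S.projIdeal W Y := by
  have : S.projIdeal X Y ≤ (S.projIdeal W Y).comap (Linear.leftComp k Y u) :=
    Submodule.span_le.2 fun _ ⟨Q, a, b, hQ, hf⟩ => by
      simpa [hf] using S.comp_mem_projIdeal hQ (u ≫ a) b
  exact this hp

/-- This is where the Frobenius property (projectives are injective) enters. -/
lemma exists_comp_eq_of_mem_projIdeal {X Y Z W : B} {f : X ⟶ Y} {g : Y ⟶ Z}
    (hfg : S.IsSES f g) {p : X ⟶ W} (hp : p ∈ S.projIdeal X W) : ∃ F : Y ⟶ W, f ≫ F = p := by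
  have : S.projIdeal X W ≤ LinearMap.range (Linear.leftComp k W f) :=
    Submodule.span_le.2 fun _ ⟨Q, a, b, hQ, hq⟩ => by
      obtain ⟨A, hA⟩ := (S.inj_iff Q).1 hQ f g hfg a
      exact ⟨A ≫ b, by simp [hq, ← hA]⟩
  exact this hp

lemma mem_of_proj {d : ℕ} {C : Set B} (hmax : S.MaxOrthogonal C d) {Q : B} (hQ : S.Proj Q) :
    Q ∈ C :=
  (hmax.2 Q).2 fun _ _ _ _ _ =>
    Submodule.eq_top_iff'.2 fun f => S.mem_projIdeal_of_proj_right hQ f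

end ProjIdeal

section StableVanishing

/-- Given conflations `A ⟶ P ⟶ A'` and `D ⟶ Q ⟶ D'` with `P`, `Q` projective, every map
`A' ⟶ D'` lifts to `P ⟶ Q` and restricts to `A ⟶ D`; if the restriction factors through a
projective, the lift can be corrected to vanish on `A`, so that the map factors through `Q`. -/
lemma sVanish_of_isSES {A P A' D Q D' : B} {i : A ⟶ P} {p : P ⟶ A'} {j : D ⟶ Q} {q : Q ⟶ D'}
    (hip : S.IsSES i p) (hjq : S.IsSES j q) (hP : S.Proj P) (hQ : S.Proj Q)
    (h : S.sVanish A D) : S.sVanish A' D' := by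
  refine Submodule.eq_top_iff'.2 fun φ => ?_
  obtain ⟨l, hl⟩ := (S.proj_iff P).1 hP j q hjq (p ≫ φ)
  obtain ⟨f, hf⟩ := (S.ses_ker j q hjq (i ≫ l) (by
    rw [Category.assoc, hl, ← Category.assoc, S.ses_zero i p hip, Limits.zero_comp])).exists
  obtain ⟨F, hF⟩ := S.exists_comp_eq_of_mem_projIdeal hip (S.mem_projIdeal_of_sVanish h f)
  obtain ⟨ψ, hψ⟩ := (S.ses_coker i p hip (l - F ≫ j) (by
    rw [Preadditive.comp_sub, ← Category.assoc, hF, hf, sub_self])).exists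
  have hφ : φ = ψ ≫ q := (S.epi_of_isSES hip).left_cancellation _ _ (by
    rw [← hl, ← Category.assoc, hψ, Preadditive.sub_comp, Category.assoc,
      S.ses_zero j q hjq, Limits.comp_zero, sub_zero])
  exact hφ ▸ S.comp_mem_projIdeal hQ ψ q

lemma sVanish_of_sVanish_syz_iterate (n : ℕ) {X Y : B}
    (h : S.sVanish (S.syz^[n] X) (S.syz^[n] Y)) : S.sVanish X Y := by
  induction n generalizing X Y with
  | zero => exact h
  | succ n ih =>
    exact S.sVanish_of_isSES (S.ses_syz X) (S.ses_syz Y) (S.projP X) (S.projP Y) (ih h)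

lemma sVanish_cosyz_iterate_of_sVanish_syz_iterate (n : ℕ) {X Y : B}
    (h : S.sVanish X (S.syz^[n] Y)) : S.sVanish (S.cosyz^[n] X) Y := by
  induction n generalizing Y with
  | zero => exact h
  | succ n ih =>
    rw [Function.iterate_succ_apply']
    exact S.sVanish_of_isSES (S.ses_cosyz _) (S.ses_syz Y) (S.projI _) (S.projP Y) (ih h)

lemma sVanish_of_stIso_right {X Y Y' : B} (hY : S.StIso Y Y') (h : S.sVanish X Y') :
    S.sVanish X Y := by
  obtain ⟨f, f', hff', -⟩ := hY
  refine Submodule.eq_top_iff'.2 fun p => ?_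
  have hp : p = (p ≫ f) ≫ f' - p ≫ (f ≫ f' - 𝟙 Y) := by
    simp only [Preadditive.comp_sub, Category.comp_id, Category.assoc, sub_sub_cancel]
  rw [hp]
  exact sub_mem (S.comp_mem_projIdeal_of_mem_left (S.mem_projIdeal_of_sVanish h _) f')
    (S.comp_mem_projIdeal_of_mem_right hff' p)

lemma sVanish_cosyz_iterate_of_mem {d : ℕ} {C : Set B} (hmax : S.MaxOrthogonal C d)
    (hstab : S.ShiftStable C d) {X Y : B} (hX : X ∈ C) (hY : Y ∈ C) {r : ℕ} (hr : 1 ≤ r)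
    (hrd : r < d) : S.sVanish (S.cosyz^[r] X) Y := by
  obtain ⟨C₁, hC₁, hiso⟩ := hstab Y hY
  have hext : S.sVanish (S.syz^[d - r] X) C₁ :=
    (hmax.1 X).1 hX (d - r) (by omega) (by omega) C₁ hC₁
  have hshift : S.sVanish (S.syz^[d - r] X) (S.syz^[d - r] (S.syz^[r] Y)) := by
    rw [← Function.iterate_add_apply, Nat.sub_add_cancel hrd.le]
    exact S.sVanish_of_stIso_right hiso hext
  exact S.sVanish_cosyz_iterate_of_sVanish_syz_iterate r
    (S.sVanish_of_sVanish_syz_iterate _ hshift)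

end StableVanishing

section Resolution

variable {C : Set B} {M : (ObjectProperty.FullSubcategory (· ∈ C))ᵒᵖ ⥤ ModuleCat k}

lemma killsProj_of_isFPStable (hM : S.IsFPStable C M) : S.KillsProj C M := by
  obtain ⟨_, C₀, _, _, _, π, hπ⟩ := hM
  intro c c' u hu
  ext z
  obtain ⟨x, rfl⟩ := (hπ c).1 z
  obtain ⟨f, rfl⟩ := Submodule.Quotient.mk_surjective _ x
  have hf : (S.SRep C C₀).map u (Submodule.Quotient.mk f) = 0 :=
    (Submodule.Quotient.mk_eq_zero _).2 (S.comp_mem_projIdeal_of_mem_left hu f)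
  have h := π.naturality_apply u (Submodule.Quotient.mk f)
  rw [hf, map_zero] at h
  exact h.symm

/-- By Yoneda, `ε p` is the image of `ε (𝟙 X)` under `M.map p`, which vanishes. -/
lemma app_eq_zero_of_mem_projIdeal (hM : S.KillsProj C M) {X : B} (hX : X ∈ C)
    (ε : LinRep (k := k) C X ⟶ M) {c : (ObjectProperty.FullSubcategory (· ∈ C))ᵒᵖ}
    {p : c.unop.obj ⟶ X} (hp : p ∈ S.projIdeal c.unop.obj X) : ε.app c p = 0 := by
  let u : c.unop ⟶ ⟨X, hX⟩ := ObjectProperty.homMk p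
  have h := ε.naturality_apply u.op (𝟙 X)
  rw [hM _ _ u.op hp] at h
  exact (congrArg (ε.app c) (Category.comp_id p).symm).trans h

lemma app_eq_zero_iff_exists_sub_comp_mem_projIdeal (hM : S.KillsProj C M) {X₁ X₀ : B}
    (hX₀ : X₀ ∈ C) {f : X₁ ⟶ X₀} (ε : LinRep (k := k) C X₀ ⟶ M)
    {c : (ObjectProperty.FullSubcategory (· ∈ C))ᵒᵖ}
    (hε : Function.Exact ((lMap (k := k) C f).app c) (ε.app c)) (y : c.unop.obj ⟶ X₀) :
    ε.app c y = 0 ↔ ∃ x : c.unop.obj ⟶ X₁, y - x ≫ f ∈ S.projIdeal c.unop.obj X₀ := by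
  constructor
  · intro hy
    obtain ⟨x, hx⟩ := exists_comp_eq_of_exact hε hy
    exact ⟨x, by simp [hx]⟩
  · rintro ⟨x, hx⟩
    have hker : (y - x ≫ f) + x ≫ f ∈ LinearMap.ker (ε.app c).hom :=
      add_mem (S.app_eq_zero_of_mem_projIdeal hM hX₀ ε hx) (app_comp_eq_zero_of_exact hε x)
    rwa [sub_add_cancel] at hker

lemma exact_sComp_of_forall_exists_sub_comp_mem (X : B) {Y Z W : B} {f : Y ⟶ Z} {g : Z ⟶ W}
    (hfg : f ≫ g = 0)
    (h : ∀ x : X ⟶ Z, x ≫ g ∈ S.projIdeal X W → ∃ y : X ⟶ Y, x - y ≫ f ∈ S.projIdeal X Z) :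
    Function.Exact (S.sComp X f) (S.sComp X g) := by
  intro z
  obtain ⟨x, rfl⟩ := Submodule.Quotient.mk_surjective _ z
  constructor
  · intro hx
    obtain ⟨y, hy⟩ := h x ((Submodule.Quotient.mk_eq_zero _).1 hx)
    exact ⟨S.sMk y, (Submodule.Quotient.eq _).2 (sub_mem_comm_iff.1 hy)⟩
  · rintro ⟨w, hw⟩
    obtain ⟨y, rfl⟩ := Submodule.Quotient.mk_surjective _ w
    rw [← hw]
    show S.sMk ((y ≫ f) ≫ g) = 0
    rw [Category.assoc, hfg, Limits.comp_zero]
    exact Submodule.Quotient.mk_zero _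

variable {Cobj : ℕ → B} (g : ∀ i, Cobj (i + 1) ⟶ Cobj i)

/-- In the complex `⋯ ⟶ C₁ ⟶ C₀` every map into `C₀` counts as a cycle. -/
def IsCycle {X : B} : ∀ {m : ℕ}, (X ⟶ Cobj m) → Prop
  | 0, _ => True
  | m + 1, t => t ≫ g m = 0

variable {g} (ε : LinRep (k := k) C (Cobj 0) ⟶ M)

lemma exists_en_comp_comp_eq_of_isCycle (hproj : ∀ Q, S.Proj Q → Q ∈ C)
    (hM : S.KillsProj C M) (hC₀ : Cobj 0 ∈ C)
    (hε : ∀ c, Function.Exact ((lMap (k := k) C (g 0)).app c) (ε.app c)) (m : ℕ)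
    (hexact : ∀ i < m, ∀ c,
      Function.Exact ((lMap (k := k) C (g (i + 1))).app c) ((lMap (k := k) C (g i)).app c))
    {X : B} (hvan : ∀ r n, 1 ≤ r → r + n = m → S.sVanish (S.cosyz^[r] X) (Cobj n))
    (t : X ⟶ Cobj m) (ht : t ∈ S.projIdeal X (Cobj m)) (hcyc : IsCycle g t) :
    ∃ W : S.I X ⟶ Cobj (m + 1), S.en X ≫ W ≫ g m = t := by
  have hIX : S.I X ∈ C := hproj _ (S.projI X)
  induction m generalizing X with
  | zero =>
    obtain ⟨H, rfl⟩ := S.exists_comp_eq_of_mem_projIdeal (S.ses_cosyz X) ht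
    obtain ⟨W, hW⟩ := exists_comp_eq_of_exact (hε (op ⟨_, hIX⟩))
      (S.app_eq_zero_of_mem_projIdeal hM hC₀ ε (S.mem_projIdeal_of_proj_left (S.projI X) H))
    exact ⟨W, by rw [hW]⟩
  | succ m ih =>
    obtain ⟨H, rfl⟩ := S.exists_comp_eq_of_mem_projIdeal (S.ses_cosyz X) ht
    -- `H ≫ g m` vanishes on `X`, so it factors through `ΣX`, where `t₁` lands in the
    -- projective ideal by `hvan`: this is where the induction moves from `X` to `ΣX`.
    obtain ⟨t₁, ht₁⟩ := (S.ses_coker _ _ (S.ses_cosyz X) (H ≫ g m) (by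
      rw [← Category.assoc]; exact hcyc)).exists
    have ht₁cyc : IsCycle g t₁ := by
      cases m with
      | zero => trivial
      | succ m =>
        refine (S.epi_of_isSES (S.ses_cosyz X)).left_cancellation _ _ ?_
        rw [← Category.assoc, ht₁, Limits.comp_zero]
        exact app_comp_eq_zero_of_exact (hexact m (by omega) (op ⟨_, hIX⟩)) H
    obtain ⟨W', hW'⟩ := ih (fun i hi => hexact i (by omega))
      (fun r n hr hrn => hvan (r + 1) n (by omega) (by omega)) t₁
      (S.mem_projIdeal_of_sVanish (hvan 1 m le_rfl (by omega)) _) ht₁cyc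
      (hproj _ (S.projI _))
    obtain ⟨W, hW⟩ := exists_comp_eq_of_exact (hexact m (by omega) (op ⟨_, hIX⟩))
      (y := H - S.cosyzEpi X ≫ S.en _ ≫ W') (by
        show (H - S.cosyzEpi X ≫ S.en _ ≫ W') ≫ g m = 0
        rw [Preadditive.sub_comp, Category.assoc, Category.assoc, hW', ht₁, sub_self])
    refine ⟨W, ?_⟩
    rw [hW, Preadditive.comp_sub, ← Category.assoc (S.en X), S.ses_zero _ _ (S.ses_cosyz X),
      Limits.zero_comp, sub_zero]

lemma exists_sub_comp_mem_projIdeal (hproj : ∀ Q, S.Proj Q → Q ∈ C)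
    (hM : S.KillsProj C M) (hC₀ : Cobj 0 ∈ C)
    (hε : ∀ c, Function.Exact ((lMap (k := k) C (g 0)).app c) (ε.app c)) (m : ℕ)
    (hexact : ∀ i ≤ m, ∀ c,
      Function.Exact ((lMap (k := k) C (g (i + 1))).app c) ((lMap (k := k) C (g i)).app c))
    (c : (ObjectProperty.FullSubcategory (· ∈ C))ᵒᵖ)
    (hvan : ∀ r n, 1 ≤ r → r + n = m → S.sVanish (S.cosyz^[r] c.unop.obj) (Cobj n))
    (x : c.unop.obj ⟶ Cobj (m + 1)) (hx : x ≫ g m ∈ S.projIdeal c.unop.obj (Cobj m)) :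
    ∃ y : c.unop.obj ⟶ Cobj (m + 2),
      x - y ≫ g (m + 1) ∈ S.projIdeal c.unop.obj (Cobj (m + 1)) := by
  have hcyc : IsCycle g (x ≫ g m) := by
    cases m with
    | zero => trivial
    | succ m => exact app_comp_eq_zero_of_exact (hexact m (by omega) c) x
  obtain ⟨W, hW⟩ := S.exists_en_comp_comp_eq_of_isCycle ε hproj hM hC₀ hε m
    (fun i hi => hexact i hi.le) hvan _ hx hcyc
  obtain ⟨y, hy⟩ := exists_comp_eq_of_exact (hexact m le_rfl c) (y := x - S.en _ ≫ W) (by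
    show (x - S.en _ ≫ W) ≫ g m = 0
    rw [Preadditive.sub_comp, Category.assoc, hW, sub_self])
  refine ⟨y, ?_⟩
  rw [hy, sub_sub_cancel]
  exact S.comp_mem_projIdeal (S.projI _) _ W

end Resolution

end FrobeniusSetup

open FrobeniusSetup in
theorem stmt8_induced_stable_resolution_exact_general
    {k : Type} [Field k] {B : Type u} [Category.{v} B] [Preadditive B]
    [CategoryTheory.Linear k B] [HasFiniteBiproducts B] [HasBinaryBiproducts B]
    (S : FrobeniusSetup k B) (d : ℕ) (C : Set B)
    (hmax : S.MaxOrthogonal C d)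
    (hstab : S.ShiftStable C d)
    (M : (ObjectProperty.FullSubcategory (· ∈ C))ᵒᵖ ⥤ ModuleCat k) (hM : S.IsFPStable C M)
    (Cobj : ℕ → B) (hC : ∀ i, i ≤ d + 1 → Cobj i ∈ C)
    (g : ∀ i : ℕ, Cobj (i + 1) ⟶ Cobj i) (ε : LinRep (k := k) C (Cobj 0) ⟶ M)
    (hres : ∀ c, Function.Surjective (ε.app c) ∧
      Function.Exact ((lMap (k := k) C (g 0)).app c) (ε.app c) ∧
      (∀ i, i < d → Function.Exact ((lMap (k := k) C (g (i + 1))).app c)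
        ((lMap (k := k) C (g i)).app c)) ∧
      Function.Injective ((lMap (k := k) C (g d)).app c)) :
    ∀ c : (ObjectProperty.FullSubcategory (· ∈ C))ᵒᵖ,
      -- `ε` descends to the stable quotients and remains surjective
      Function.Surjective (ε.app c) ∧
      -- exactness at `B̄(-,C₀)` (representative-wise)
      (∀ y : c.unop.obj ⟶ Cobj 0, ε.app c y = 0 ↔
        ∃ x : c.unop.obj ⟶ Cobj 1, y - x ≫ g 0 ∈ S.projIdeal c.unop.obj (Cobj 0)) ∧
      -- exactness at `B̄(-,C_i)` for `1 ≤ i ≤ d`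
      (∀ i, i < d → Function.Exact ((S.sMap C (g (i + 1))).app c)
        ((S.sMap C (g i)).app c)) := by
  have hproj : ∀ Q, S.Proj Q → Q ∈ C := fun _ hQ => S.mem_of_proj hmax hQ
  have hkill := S.killsProj_of_isFPStable hM
  have hC₀ := hC 0 (Nat.zero_le _)
  have hexact : ∀ i < d, ∀ c, Function.Exact ((lMap (k := k) C (g (i + 1))).app c)
      ((lMap (k := k) C (g i)).app c) := fun i hi c => (hres c).2.2.1 i hi
  intro c
  refine ⟨(hres c).1, S.app_eq_zero_iff_exists_sub_comp_mem_projIdeal hkill hC₀ ε (hres c).2.1,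
    fun i hi => S.exact_sComp_of_forall_exists_sub_comp_mem _ ?_ fun x hx => ?_⟩
  · exact comp_eq_zero_of_exact_lMap (hC (i + 2) (by omega)) (hexact i hi _)
  · exact S.exists_sub_comp_mem_projIdeal ε hproj hkill hC₀ (fun c => (hres c).2.1) i
      (fun j hj => hexact j (by omega)) c
      (fun r n hr hrn => S.sVanish_cosyz_iterate_of_mem hmax hstab c.unop.property
        (hC n (by omega)) hr (by omega)) x hx

open FrobeniusSetup in
/-- Theorem 2.5(2).  Given `M ∈ mod-C̄` with a projective
resolution `0 → B(-,C_{d+1}) → ⋯ → B(-,C₀) → M → 0` in `mod-C` as in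
Theorem 2.5(1), the induced sequence of functors on `C̄`
`0 → Tor^C_{d+1}(M,C̄) → B̄(-,C_{d+1}) → ⋯ → B̄(-,C₀) → M → 0` is exact.
Here `Tor^C_{d+1}(M,C̄)` is (computed from this resolution as) the kernel of
the induced map `B̄(-,C_{d+1}) → B̄(-,C_d)`, so exactness of the displayed
sequence at `Tor^C_{d+1}(M,C̄)` and at `B̄(-,C_{d+1})` holds by definition of
the kernel; the remaining exactness assertions are the content below.  Hence
the sequence gives the first `d+2` terms of a projective resolution of `M` in
`mod-C̄`. -/
theorem stmt8_induced_stable_resolution_exact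
    {k : Type} [Field k] {B : Type u} [Category.{v} B] [Preadditive B]
    [CategoryTheory.Linear k B] [HasFiniteBiproducts B] [HasBinaryBiproducts B]
    (S : FrobeniusSetup k B) (d : ℕ) (hd : 2 ≤ d) (C : Set B)
    (hff : S.FunctoriallyFinite C) (hmax : S.MaxOrthogonal C d)
    (hstab : S.ShiftStable C d)
    (M : (ObjectProperty.FullSubcategory (· ∈ C))ᵒᵖ ⥤ ModuleCat k) (hM : S.IsFPStable C M)
    (Cobj : ℕ → B) (hC : ∀ i, i ≤ d + 1 → Cobj i ∈ C)
    (g : ∀ i : ℕ, Cobj (i + 1) ⟶ Cobj i) (ε : LinRep (k := k) C (Cobj 0) ⟶ M)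
    (hres : ∀ c, Function.Surjective (ε.app c) ∧
      Function.Exact ((lMap (k := k) C (g 0)).app c) (ε.app c) ∧
      (∀ i, i < d → Function.Exact ((lMap (k := k) C (g (i + 1))).app c)
        ((lMap (k := k) C (g i)).app c)) ∧
      Function.Injective ((lMap (k := k) C (g d)).app c)) :
    ∀ c : (ObjectProperty.FullSubcategory (· ∈ C))ᵒᵖ,
      -- `ε` descends to the stable quotients and remains surjective
      Function.Surjective (ε.app c) ∧
      -- exactness at `B̄(-,C₀)` (representative-wise)
      (∀ y : c.unop.obj ⟶ Cobj 0, ε.app c y = 0 ↔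
        ∃ x : c.unop.obj ⟶ Cobj 1, y - x ≫ g 0 ∈ S.projIdeal c.unop.obj (Cobj 0)) ∧
      -- exactness at `B̄(-,C_i)` for `1 ≤ i ≤ d`
      (∀ i, i < d → Function.Exact ((S.sMap C (g (i + 1))).app c)
        ((S.sMap C (g i)).app c)) :=
  stmt8_induced_stable_resolution_exact_general S d C hmax hstab M hM Cobj hC g ε hres
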